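/- For every k ≥ 1, the Laurent polynomial W k is nonzero and mindeg (W k) = -4k - 8. (Equivalently, in the variable t = z², deg_L(V(W_n(B₃))) = -n - 4 for every even n ≥ 2.) -/

import Mathlib

open LaurentPolynomial

noncomputable def U : LaurentPolynomial ℤ := -T 1 - T (-1)

noncomputable def Q3 : LaurentPolynomial ℤ :=
  T 9 - 2 * T 7 + T 5 - 2 * T 3 - 2 * T 1 - 2 * T (-1) - 2 * T (-3) + T (-5)
    - 2 * T (-7) + T (-9)

/-- The maximum exponent in the support of a Laurent polynomial. -/
noncomputable def maxdeg (p : LaurentPolynomial ℤ) : WithBot ℤ := p.coeff.support.max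

/-- The minimum exponent in the support of a Laurent polynomial. -/
noncomputable def mindeg (p : LaurentPolynomial ℤ) : WithTop ℤ := p.coeff.support.min

/-- The skein operator encoding the relation between Jones polynomials of
successive Whitehead doubles of `B₃`. -/
noncomputable def Phi (p : LaurentPolynomial ℤ) : LaurentPolynomial ℤ :=
  T (-4) * p + (T (-3) - T (-1)) * Q3

/-! The fixed term `(z⁻³ - z⁻¹) Q₃` of `Φ` has lowest monomial `z⁻¹²`. Since `U²` starts at `z⁻²`,
`W 1 = Φ (U²)` starts at `z⁻¹²`; from then on the shifted part `z⁻⁴ W k` starts strictly below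
`z⁻¹²`, so no cancellation occurs and each application of `Φ` lowers the lowest degree by
exactly `4`. -/

namespace LaurentPolynomial

lemma coeff_T_mul {R : Type*} [Semiring R] (p : R[T;T⁻¹]) (e n : ℤ) :
    (T e * p).coeff n = p.coeff (n - e) := by
  rw [T, AddMonoidAlgebra.coeff_single_mul_apply, one_mul, neg_add_eq_sub]

end LaurentPolynomial

section mindeg

variable {p q : LaurentPolynomial ℤ} {m : ℤ}

lemma coeff_eq_zero_of_lt_mindeg (h : (m : WithTop ℤ) < mindeg p) : p.coeff m = 0 := by
  by_contra hm
  exact (Finset.min_le (Finsupp.mem_support_iff.mpr hm)).not_gt h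

lemma coeff_ne_zero_of_mindeg_eq (h : mindeg p = m) : p.coeff m ≠ 0 :=
  Finsupp.mem_support_iff.mp (Finset.mem_of_min h)

lemma mindeg_eq_coe (hm : p.coeff m ≠ 0) (h : ∀ n < m, p.coeff n = 0) : mindeg p = m := by
  refine le_antisymm (Finset.min_le (Finsupp.mem_support_iff.mpr hm)) (Finset.le_min fun n hn => ?_)
  by_contra hlt
  exact Finsupp.mem_support_iff.mp hn (h n (by exact_mod_cast not_le.mp hlt))

lemma mindeg_eq_top_iff : mindeg p = ⊤ ↔ p = 0 := by
  rw [mindeg, Finset.min_eq_top, Finsupp.support_eq_empty, ← AddMonoidAlgebra.coeff_zero,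
    AddMonoidAlgebra.coeff_inj]

lemma mindeg_neg : mindeg (-p) = mindeg p := by
  simp [mindeg]

lemma mindeg_add_of_lt (h : mindeg p < mindeg q) : mindeg (p + q) = mindeg p := by
  obtain ⟨m, hm⟩ := WithTop.ne_top_iff_exists.mp h.ne_top
  rw [← hm] at h ⊢
  have hq : ∀ n ≤ m, q.coeff n = 0 := fun n hn =>
    coeff_eq_zero_of_lt_mindeg ((WithTop.coe_le_coe.mpr hn).trans_lt h)
  refine mindeg_eq_coe ?_ fun n hn => ?_
  · rw [AddMonoidAlgebra.coeff_add, Finsupp.add_apply, hq m le_rfl, add_zero]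
    exact coeff_ne_zero_of_mindeg_eq hm.symm
  · rw [AddMonoidAlgebra.coeff_add, Finsupp.add_apply, hq n hn.le, add_zero]
    exact coeff_eq_zero_of_lt_mindeg (hm ▸ WithTop.coe_lt_coe.mpr hn)

lemma mindeg_T_mul (e : ℤ) (p : LaurentPolynomial ℤ) : mindeg (T e * p) = e + mindeg p := by
  cases hp : mindeg p with
  | top => simp [mindeg_eq_top_iff.mp hp, mindeg_eq_top_iff]
  | coe m =>
    rw [← WithTop.coe_add]
    refine mindeg_eq_coe ?_ fun n hn => ?_ <;> rw [coeff_T_mul]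
    · simpa using coeff_ne_zero_of_mindeg_eq hp
    · exact coeff_eq_zero_of_lt_mindeg (hp ▸ WithTop.coe_lt_coe.mpr (by omega))

end mindeg

lemma mindeg_Q3 : mindeg Q3 = ((-9 : ℤ) : WithTop ℤ) := by
  refine mindeg_eq_coe (by simp [Q3, two_mul]) fun n hn => ?_
  simp only [Q3, two_mul, AddMonoidAlgebra.coeff_add, AddMonoidAlgebra.coeff_sub,
    Finsupp.add_apply, Finsupp.sub_apply, T_apply]
  split_ifs <;> omega

lemma U_sq : U ^ 2 = T (-2) + 2 * T 0 + T 2 := by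
  rw [U, show (-2 : ℤ) = -1 + -1 by norm_num, show (0 : ℤ) = 1 + -1 by norm_num,
    show (2 : ℤ) = 1 + 1 by norm_num, T_add, T_add, T_add]
  ring

lemma mindeg_U_sq : mindeg (U ^ 2) = ((-2 : ℤ) : WithTop ℤ) := by
  refine mindeg_eq_coe (by simp [U_sq]) fun n hn => ?_
  simp only [U_sq, two_mul, AddMonoidAlgebra.coeff_add, Finsupp.add_apply, T_apply]
  split_ifs <;> omega

lemma mindeg_skein_term : mindeg ((T (-3) - T (-1)) * Q3) = ((-12 : ℤ) : WithTop ℤ) := by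
  rw [sub_mul, sub_eq_add_neg, mindeg_add_of_lt] <;>
    rw [mindeg_T_mul, mindeg_Q3, ← WithTop.coe_add]
  · rfl
  · rw [mindeg_neg, mindeg_T_mul, mindeg_Q3, ← WithTop.coe_add]
    decide

section Phi

variable {p : LaurentPolynomial ℤ} {m : ℤ}

lemma mindeg_Phi_of_lt (hp : mindeg p = m) (hm : m < -8) : mindeg (Phi p) = (m - 4 : ℤ) := by
  rw [Phi, mindeg_add_of_lt] <;> rw [mindeg_T_mul, hp, ← WithTop.coe_add]
  · rw [neg_add_eq_sub]
  · rw [mindeg_skein_term]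
    exact WithTop.coe_lt_coe.mpr (by omega)

lemma mindeg_Phi_of_gt (hp : ((-8 : ℤ) : WithTop ℤ) < mindeg p) :
    mindeg (Phi p) = ((-12 : ℤ) : WithTop ℤ) := by
  rw [Phi, add_comm, mindeg_add_of_lt, mindeg_skein_term]
  rw [mindeg_skein_term, mindeg_T_mul]
  cases h : mindeg p with
  | top => exact WithTop.coe_lt_top _
  | coe m =>
    rw [h, WithTop.coe_lt_coe] at hp
    rw [← WithTop.coe_add]
    exact WithTop.coe_lt_coe.mpr (by omega)

end Phi

/-- The Jones polynomials of the Whitehead even doubles `W_{2k}(B₃)` have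
lowest degree `-4k - 8` in `z`. -/
theorem mindeg_W_even (W : ℕ → LaurentPolynomial ℤ) (hW0 : W 0 = U ^ 2)
    (hWrec : ∀ k : ℕ, W (k + 1) = Phi (W k)) :
    ∀ k : ℕ, 1 ≤ k →
      W k ≠ 0 ∧ mindeg (W k) = ((-4 * (k : ℤ) - 8 : ℤ) : WithTop ℤ) := by
  intro k hk
  have hdeg : mindeg (W k) = ((-4 * (k : ℤ) - 8 : ℤ) : WithTop ℤ) := by
    induction k, hk using Nat.le_induction with
    | base => rw [hWrec, hW0, mindeg_Phi_of_gt (by rw [mindeg_U_sq]; decide)]; rfl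
    | succ k _ ih =>
      rw [hWrec, mindeg_Phi_of_lt ih (by omega)]
      congr 1
      push_cast
      ring
  refine ⟨fun h0 => ?_, hdeg⟩
  rw [h0, mindeg_eq_top_iff.mpr rfl] at hdeg
  exact WithTop.top_ne_coe hdeg
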